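/- arXiv:1605.00417 — 5 statements merged into one kernel-verified Lean document; each statement's English description precedes it below -/
import Mathlib

section
/- For all natural numbers m₁, m₂, the cardinality of S(m₁,m₂) satisfies 6·#S(m₁,m₂) = (m₁+1)(m₂+1)(m₁+m₂+2)(m₁+2m₂+3); that is, the number of lattice points in the polytope SP₄(m₁,m₂) equals (1/6)(m₁+1)(m₂+1)(m₁+m₂+2)(m₁+2m₂+3). -/
open Finset

/-- The lattice points of the polytope SP₄(m₁,m₂) ⊂ ℝ⁴: quadruples
(x₁,x₂,x₃,x₄) ∈ ℕ⁴ with x₁ ≤ m₁, x₄ ≤ m₂, 2x₁ + x₂ + 2x₃ + 2x₄ ≤ 2(m₁+m₂),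
and x₁ + x₂ + x₃ + 2x₄ ≤ m₁ + 2m₂. -/
def SP4 (m₁ m₂ : ℕ) : Set (ℕ × ℕ × ℕ × ℕ) :=
  {p | p.1 ≤ m₁ ∧ p.2.2.2 ≤ m₂ ∧
       2 * p.1 + p.2.1 + 2 * p.2.2.1 + 2 * p.2.2.2 ≤ 2 * (m₁ + m₂) ∧
       p.1 + p.2.1 + p.2.2.1 + 2 * p.2.2.2 ≤ m₁ + 2 * m₂}

/-- Slice in the (x₂,x₃)-plane. -/
def SPinner (a b : ℕ) : Finset (ℕ × ℕ) :=
  (range (a+b+1)).biUnion fun x₃ =>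
    (range ((a+b-x₃) + min (a+b-x₃) b + 1)).image fun x₂ => (x₂, x₃)

lemma mem_SPinner {a b x₂ x₃ : ℕ} :
    (x₂, x₃) ∈ SPinner a b ↔ x₂ + 2*x₃ ≤ 2*(a+b) ∧ x₂ + x₃ ≤ a + 2*b := by
  simp only [SPinner, mem_biUnion, mem_image, mem_range, Prod.mk.injEq]
  constructor
  · rintro ⟨j, hj, x, hx, rfl, rfl⟩; omega
  · intro h; exact ⟨x₃, by omega, x₂, by omega, rfl, rfl⟩

lemma SPinner_card (a b : ℕ) :
    (SPinner a b).card = ∑ y ∈ range (a+b+1), (y + min y b + 1) := by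
  rw [SPinner, card_biUnion]
  · have h : ∀ j ∈ range (a+b+1),
        ((range ((a+b-j) + min (a+b-j) b + 1)).image fun x₂ => (x₂, j)).card
          = (a+b-j) + min (a+b-j) b + 1 := by
      intro j _
      have hinj : Function.Injective fun x₂ : ℕ => (x₂, j) :=
        fun x y h => congrArg Prod.fst h
      rw [card_image_of_injective _ hinj, card_range]
    rw [sum_congr rfl h]
    have := Finset.sum_range_reflect (fun y => y + min y b + 1) (a+b+1)
    simpa using this
  · intro x hx y hy hxy
    simp only [disjoint_left, mem_image, mem_range]
    rintro p ⟨u, hu, rfl⟩ ⟨v, hv, hvy⟩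
    have : y = x := congrArg Prod.snd hvy
    exact hxy this.symm

lemma two_sum_id (n : ℕ) : 2 * ∑ y ∈ range n, (y+1) = n * (n+1) := by
  induction n with
  | zero => simp
  | succ n ih => rw [sum_range_succ, Nat.mul_add, ih]; ring

lemma two_sum_min (a b : ℕ) :
    2 * ∑ y ∈ range (a+b+1), min y b = b*(b+1) + 2*a*b := by
  induction a with
  | zero =>
    simp only [Nat.zero_add]
    rw [sum_congr rfl fun y hy => min_eq_left (by simp at hy; omega), mul_comm,
      Finset.sum_range_id_mul_two]
    simp [Nat.add_sub_cancel]
    ring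
  | succ a ih =>
    have h : a + 1 + b + 1 = (a + b + 1) + 1 := by ring
    rw [h, sum_range_succ, min_eq_right (by omega), Nat.mul_add, ih]
    ring

lemma SPinner_card_val (a b : ℕ) :
    2 * (SPinner a b).card = (a+1)*(a+4*b+2) + 2*b^2 := by
  rw [SPinner_card]
  have h : ∑ y ∈ range (a+b+1), (y + min y b + 1)
      = ∑ y ∈ range (a+b+1), (y+1) + ∑ y ∈ range (a+b+1), min y b := by
    rw [← sum_add_distrib]; exact sum_congr rfl fun y _ => by ring
  rw [h, Nat.mul_add, two_sum_id, two_sum_min]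
  ring

/-- The finite model of SP4. -/
def SPfin (m₁ m₂ : ℕ) : Finset (ℕ × ℕ × ℕ × ℕ) :=
  (range (m₁+1)).biUnion fun x₁ =>
    (range (m₂+1)).biUnion fun x₄ =>
      (SPinner (m₁-x₁) (m₂-x₄)).image fun q => (x₁, q.1, q.2, x₄)

lemma SPfin_card (m₁ m₂ : ℕ) :
    (SPfin m₁ m₂).card
      = ∑ x₁ ∈ range (m₁+1), ∑ x₄ ∈ range (m₂+1), (SPinner (m₁-x₁) (m₂-x₄)).card := by
  rw [SPfin, card_biUnion]
  · refine sum_congr rfl fun x₁ _ => ?_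
    rw [card_biUnion]
    · refine sum_congr rfl fun x₄ _ => ?_
      have hinj : Function.Injective fun q : ℕ × ℕ => (x₁, q.1, q.2, x₄) := by
        intro p q h
        have h1 : p.1 = q.1 := congrArg (fun r => r.2.1) h
        have h2 : p.2 = q.2 := congrArg (fun r => r.2.2.1) h
        exact Prod.ext h1 h2
      exact card_image_of_injective _ hinj
    · intro x hx y hy hxy
      simp only [disjoint_left, mem_image]
      rintro p ⟨u, hu, rfl⟩ ⟨v, hv, hvy⟩
      have : y = x := congrArg (fun r : ℕ × ℕ × ℕ × ℕ => r.2.2.2) hvy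
      exact hxy this.symm
  · intro x hx y hy hxy
    simp only [disjoint_left, mem_biUnion, mem_image]
    rintro p ⟨c, hc, u, hu, rfl⟩ ⟨d, hd, v, hv, hvy⟩
    have : y = x := congrArg (fun r : ℕ × ℕ × ℕ × ℕ => r.1) hvy
    exact hxy this.symm

lemma SP4_eq_SPfin (m₁ m₂ : ℕ) : SP4 m₁ m₂ = ↑(SPfin m₁ m₂) := by
  ext ⟨x₁, x₂, x₃, x₄⟩
  simp only [SP4, Set.mem_setOf_eq, Finset.coe_sort_coe, Finset.mem_coe, SPfin,
    mem_biUnion, mem_image, mem_range, Prod.mk.injEq]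
  constructor
  · rintro ⟨h1, h2, h3, h4⟩
    exact ⟨x₁, by omega, x₄, by omega, (x₂, x₃),
      mem_SPinner.2 (by constructor <;> omega), rfl, rfl, rfl, rfl⟩
  · rintro ⟨a, ha, d, hd, ⟨u, v⟩, huv, rfl, rfl, rfl, rfl⟩
    have h := mem_SPinner.1 huv
    dsimp only
    omega

lemma sum_reflect' (g : ℕ → ℕ) (m : ℕ) :
    ∑ x ∈ range (m+1), g (m - x) = ∑ x ∈ range (m+1), g x := by
  have := Finset.sum_range_reflect g (m+1); simpa using this

lemma K1 (a N : ℕ) :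
    3 * ∑ b ∈ range (N+1), ((a+1)*(a+4*b+2) + 2*b^2)
      = 3*(a+1)*(N+1)*(a+2) + 6*(a+1)*N*(N+1) + N*(N+1)*(2*N+1) := by
  induction N with
  | zero => simp [Finset.sum_range_one]; ring
  | succ N ih => rw [sum_range_succ, Nat.mul_add, ih]; ring

lemma K2 (M N : ℕ) :
    3 * ∑ a ∈ range (M+1), ∑ b ∈ range (N+1), ((a+1)*(a+4*b+2) + 2*b^2)
      = (M+1)*(N+1)*(M+N+2)*(M+2*N+3) := by
  induction M with
  | zero => rw [Finset.sum_range_one, K1]; ring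
  | succ M ih => rw [sum_range_succ, Nat.mul_add, ih, K1]; ring

/-- The number of lattice points in SP₄(m₁,m₂) is
(1/6)(m₁+1)(m₂+1)(m₁+m₂+2)(m₁+2m₂+3). -/
theorem SP4_card (m₁ m₂ : ℕ) :
    6 * (SP4 m₁ m₂).ncard =
      (m₁ + 1) * (m₂ + 1) * (m₁ + m₂ + 2) * (m₁ + 2 * m₂ + 3) := by
  rw [SP4_eq_SPfin, Set.ncard_coe_finset, SPfin_card]
  have hr : ∑ x₁ ∈ range (m₁+1), ∑ x₄ ∈ range (m₂+1), (SPinner (m₁-x₁) (m₂-x₄)).card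
      = ∑ a ∈ range (m₁+1), ∑ b ∈ range (m₂+1), (SPinner a b).card := by
    rw [sum_reflect' (fun a => ∑ x₄ ∈ range (m₂+1), (SPinner a (m₂-x₄)).card) m₁]
    exact sum_congr rfl fun a _ => sum_reflect' (fun b => (SPinner a b).card) m₂
  rw [hr]
  have hK := K2 m₁ m₂
  have hsum : ∑ a ∈ range (m₁+1), ∑ b ∈ range (m₂+1), ((a+1)*(a+4*b+2) + 2*b^2)
      = ∑ a ∈ range (m₁+1), ∑ b ∈ range (m₂+1), 2 * (SPinner a b).card :=
    sum_congr rfl fun a _ => sum_congr rfl fun b _ => (SPinner_card_val a b).symm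
  have h2 : ∑ a ∈ range (m₁+1), ∑ b ∈ range (m₂+1), 2 * (SPinner a b).card
      = 2 * ∑ a ∈ range (m₁+1), ∑ b ∈ range (m₂+1), (SPinner a b).card := by
    rw [Finset.mul_sum]
    exact sum_congr rfl fun a _ => (Finset.mul_sum _ _ _).symm
  rw [hsum, h2] at hK
  calc 6 * ∑ a ∈ range (m₁+1), ∑ b ∈ range (m₂+1), (SPinner a b).card
      = 3 * (2 * ∑ a ∈ range (m₁+1), ∑ b ∈ range (m₂+1), (SPinner a b).card) := by ring
    _ = _ := hK
end

section
/- For all natural numbers m₁, m₂, m₁′, m₂′, the Minkowski sum satisfies S(m₁,m₂) + S(m₁′,m₂′) = S(m₁+m₁′, m₂+m₂′), where the Minkowski sum of two subsets A, B ⊆ ℕ⁴ is {a + b : a ∈ A, b ∈ B}. -/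
open Pointwise

lemma SP4_add_subset (m₁ m₂ m₁' m₂' : ℕ) :
    SP4 m₁ m₂ + SP4 m₁' m₂' ⊆ SP4 (m₁ + m₁') (m₂ + m₂') := by
  rintro p ⟨⟨a1,a2,a3,a4⟩, ha, ⟨b1,b2,b3,b4⟩, hb, rfl⟩
  simp only [SP4, Set.mem_setOf_eq, Prod.mk_add_mk] at *
  omega

lemma SP4_zero : SP4 0 0 = 0 := by
  ext ⟨x, y, z, w⟩
  simp only [SP4, Set.mem_setOf_eq, Set.mem_zero, Prod.ext_iff, Prod.fst_zero, Prod.snd_zero]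
  omega

lemma SP4_step1 (a b : ℕ) : SP4 a b + SP4 1 0 = SP4 (a + 1) b := by
  apply Set.Subset.antisymm
  · have := SP4_add_subset a b 1 0
    simpa using this
  · rintro ⟨x, y, z, w⟩ h
    simp only [SP4, Set.mem_setOf_eq] at h
    rcases Nat.eq_zero_or_pos x with hx | hx
    · rcases Nat.eq_zero_or_pos z with hz | hz
      · rcases Nat.eq_zero_or_pos y with hy | hy
        · exact ⟨(x, y, z, w), by simp only [SP4, Set.mem_setOf_eq]; omega,
            (0, 0, 0, 0), by simp only [SP4, Set.mem_setOf_eq]; omega,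
            by simp [Prod.ext_iff]⟩
        · exact ⟨(x, y - 1, z, w), by simp only [SP4, Set.mem_setOf_eq]; omega,
            (0, 1, 0, 0), by simp only [SP4, Set.mem_setOf_eq]; omega,
            by simp [Prod.ext_iff, Prod.mk_add_mk]; omega⟩
      · exact ⟨(x, y, z - 1, w), by simp only [SP4, Set.mem_setOf_eq]; omega,
          (0, 0, 1, 0), by simp only [SP4, Set.mem_setOf_eq]; omega,
          by simp [Prod.ext_iff, Prod.mk_add_mk]; omega⟩
    · exact ⟨(x - 1, y, z, w), by simp only [SP4, Set.mem_setOf_eq]; omega,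
        (1, 0, 0, 0), by simp only [SP4, Set.mem_setOf_eq]; omega,
        by simp [Prod.ext_iff, Prod.mk_add_mk]; omega⟩

lemma SP4_step2 (a b : ℕ) : SP4 a b + SP4 0 1 = SP4 a (b + 1) := by
  apply Set.Subset.antisymm
  · have := SP4_add_subset a b 0 1
    simpa using this
  · rintro ⟨x, y, z, w⟩ h
    simp only [SP4, Set.mem_setOf_eq] at h
    rcases Nat.eq_zero_or_pos w with hw | hw
    · by_cases h4 : x + y + z ≥ a + 2 * b + 2
      · -- subtract (0,2,0,0); y ≥ 2 follows
        exact ⟨(x, y - 2, z, w), by simp only [SP4, Set.mem_setOf_eq]; omega,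
          (0, 2, 0, 0), by simp only [SP4, Set.mem_setOf_eq]; omega,
          by simp [Prod.ext_iff, Prod.mk_add_mk]; omega⟩
      · by_cases h4' : x + y + z = a + 2 * b + 1
        · by_cases h3 : 2 * x + y + 2 * z ≥ 2 * (a + b) + 2
          · -- subtract e3; z ≥ 1 follows
            exact ⟨(x, y, z - 1, w), by simp only [SP4, Set.mem_setOf_eq]; omega,
              (0, 0, 1, 0), by simp only [SP4, Set.mem_setOf_eq]; omega,
              by simp [Prod.ext_iff, Prod.mk_add_mk]; omega⟩
          · -- subtract e2; y ≥ 1 follows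
            exact ⟨(x, y - 1, z, w), by simp only [SP4, Set.mem_setOf_eq]; omega,
              (0, 1, 0, 0), by simp only [SP4, Set.mem_setOf_eq]; omega,
              by simp [Prod.ext_iff, Prod.mk_add_mk]; omega⟩
        · -- x + y + z ≤ a + 2b
          by_cases h3 : 2 * x + y + 2 * z ≤ 2 * (a + b)
          · exact ⟨(x, y, z, w), by simp only [SP4, Set.mem_setOf_eq]; omega,
              (0, 0, 0, 0), by simp only [SP4, Set.mem_setOf_eq]; omega,
              by simp [Prod.ext_iff]⟩
          · by_cases h3' : 2 * x + y + 2 * z = 2 * (a + b) + 1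
            · -- subtract e2; y ≥ 1 by parity
              exact ⟨(x, y - 1, z, w), by simp only [SP4, Set.mem_setOf_eq]; omega,
                (0, 1, 0, 0), by simp only [SP4, Set.mem_setOf_eq]; omega,
                by simp [Prod.ext_iff, Prod.mk_add_mk]; omega⟩
            · rcases Nat.eq_zero_or_pos z with hz | hz
              · -- z = 0, subtract (0,2,0,0); y ≥ 2 follows
                exact ⟨(x, y - 2, z, w), by simp only [SP4, Set.mem_setOf_eq]; omega,
                  (0, 2, 0, 0), by simp only [SP4, Set.mem_setOf_eq]; omega,
                  by simp [Prod.ext_iff, Prod.mk_add_mk]; omega⟩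
              · exact ⟨(x, y, z - 1, w), by simp only [SP4, Set.mem_setOf_eq]; omega,
                  (0, 0, 1, 0), by simp only [SP4, Set.mem_setOf_eq]; omega,
                  by simp [Prod.ext_iff, Prod.mk_add_mk]; omega⟩
    · -- subtract e4
      exact ⟨(x, y, z, w - 1), by simp only [SP4, Set.mem_setOf_eq]; omega,
        (0, 0, 0, 1), by simp only [SP4, Set.mem_setOf_eq]; omega,
        by simp [Prod.ext_iff, Prod.mk_add_mk]; omega⟩

/-- Minkowski sum property: S(m₁,m₂) + S(m₁′,m₂′) = S(m₁+m₁′, m₂+m₂′). -/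
theorem SP4_minkowski (m₁ m₂ m₁' m₂' : ℕ) :
    SP4 m₁ m₂ + SP4 m₁' m₂' = SP4 (m₁ + m₁') (m₂ + m₂') := by
  induction m₁' with
  | zero =>
    induction m₂' with
    | zero => simp [SP4_zero]
    | succ b ih =>
      calc SP4 m₁ m₂ + SP4 0 (b + 1) = SP4 m₁ m₂ + (SP4 0 b + SP4 0 1) := by
            rw [SP4_step2]
        _ = (SP4 m₁ m₂ + SP4 0 b) + SP4 0 1 := (add_assoc _ _ _).symm
        _ = SP4 (m₁ + 0) (m₂ + b) + SP4 0 1 := by rw [ih]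
        _ = SP4 (m₁ + 0) (m₂ + b + 1) := SP4_step2 _ _
        _ = SP4 (m₁ + 0) (m₂ + (b + 1)) := by ring_nf
  | succ a ih =>
    calc SP4 m₁ m₂ + SP4 (a + 1) m₂' = SP4 m₁ m₂ + (SP4 a m₂' + SP4 1 0) := by
          rw [SP4_step1]
      _ = (SP4 m₁ m₂ + SP4 a m₂') + SP4 1 0 := (add_assoc _ _ _).symm
      _ = SP4 (m₁ + a) (m₂ + m₂') + SP4 1 0 := by rw [ih]
      _ = SP4 (m₁ + a + 1) (m₂ + m₂') := SP4_step1 _ _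
      _ = SP4 (m₁ + (a + 1)) (m₂ + m₂') := by ring_nf
end

section
/- For all natural numbers m₁ ≥ 1 and m₂, one has the Minkowski sum identity S(m₁−1, m₂) + S(1, 0) = S(m₁, m₂), where the Minkowski sum of two subsets A, B ⊆ ℕ⁴ is {a + b : a ∈ A, b ∈ B}. -/
open Pointwise

/-- For m₁ ≥ 1, the Minkowski sum identity S(m₁−1, m₂) + S(1, 0) = S(m₁, m₂). -/
theorem SP4_minkowski_step_one (m₁ m₂ : ℕ) (h : 1 ≤ m₁) :
    SP4 (m₁ - 1) m₂ + SP4 1 0 = SP4 m₁ m₂ := by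
  ext ⟨x₁, x₂, x₃, x₄⟩
  simp only [Set.mem_add, SP4, Set.mem_setOf_eq, Prod.exists, Prod.mk_add_mk, Prod.mk.injEq]
  constructor
  · rintro ⟨a₁, a₂, a₃, a₄, ⟨ha1, ha2, ha3, ha4⟩, b₁, b₂, b₃, b₄,
      ⟨hb1, hb2, hb3, hb4⟩, e1, e2, e3, e4⟩
    omega
  · rintro ⟨h1, h2, h3, h4⟩
    rcases Nat.eq_zero_or_pos x₁ with hx1 | hx1
    · rcases Nat.eq_zero_or_pos x₃ with hx3 | hx3
      · rcases Nat.eq_zero_or_pos x₂ with hx2 | hx2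
        · exact ⟨x₁, x₂, x₃, x₄, by omega, 0, 0, 0, 0, by omega, by omega⟩
        · exact ⟨x₁, x₂ - 1, x₃, x₄, by omega, 0, 1, 0, 0, by omega, by omega⟩
      · exact ⟨x₁, x₂, x₃ - 1, x₄, by omega, 0, 0, 1, 0, by omega, by omega⟩
    · exact ⟨x₁ - 1, x₂, x₃, x₄, by omega, 1, 0, 0, 0, by omega, by omega⟩
end

section
/- For every natural number m₂ ≥ 1, one has the Minkowski sum identity S(0, m₂−1) + S(0, 1) = S(0, m₂), where the Minkowski sum of two subsets A, B ⊆ ℕ⁴ is {a + b : a ∈ A, b ∈ B}. -/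
open Pointwise

/-- For m₂ ≥ 1, the Minkowski sum identity S(0, m₂−1) + S(0, 1) = S(0, m₂). -/
theorem SP4_minkowski_step_two (m₂ : ℕ) (h : 1 ≤ m₂) :
    SP4 0 (m₂ - 1) + SP4 0 1 = SP4 0 m₂ := by
  ext ⟨x₁, x₂, x₃, x₄⟩
  simp only [Set.mem_add, SP4, Set.mem_setOf_eq, Prod.exists, Prod.mk_add_mk,
    Prod.mk.injEq]
  constructor
  · rintro ⟨a₁, a₂, a₃, a₄, ⟨ha1, ha2, ha3, ha4⟩, b₁, b₂, b₃, b₄,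
      ⟨hb1, hb2, hb3, hb4⟩, h1, h2, h3, h4⟩
    refine ⟨by omega, by omega, by omega, by omega⟩
  · rintro ⟨h1, h2, h3, h4⟩
    by_cases hc : 1 ≤ x₄
    · exact ⟨0, x₂, x₃, x₄ - 1, by omega, 0, 0, 0, 1, by omega, by omega⟩
    · by_cases hb : 1 ≤ x₃
      · exact ⟨0, x₂, x₃ - 1, x₄, by omega, 0, 0, 1, 0, by omega, by omega⟩
      · by_cases ha : 2 ≤ x₂
        · exact ⟨0, x₂ - 2, x₃, x₄, by omega, 0, 2, 0, 0, by omega, by omega⟩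
        · by_cases ha1 : 1 ≤ x₂
          · exact ⟨0, x₂ - 1, x₃, x₄, by omega, 0, 1, 0, 0, by omega, by omega⟩
          · exact ⟨0, x₂, x₃, x₄, by omega, 0, 0, 0, 0, by omega, by omega⟩
end

section
/- Let N be a positive natural number, and for every pair of indices 1 ≤ i < j ≤ N let T_{ij} be a finite set of functions n : {1,…,N} → ℕ whose support is contained in {i+1,…,j−1}. Then there exists a function d : {1,…,N} → ℕ with d(k) ≥ 1 for all k, such that for every pair i < j and every n ∈ T_{ij} one has d(i) + d(j) > Σ_{k=i+1}^{j−1} n(k)·d(k). -/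
def Dfun (N : ℕ) (T : Fin N → Fin N → Finset (Fin N → ℕ)) : ℕ → ℕ := fun j =>
  1 + Finset.univ.sup (fun p : Fin N × Fin N =>
    if p.2.val = j ∧ p.1 < p.2 then
      (T p.1 p.2).sup (fun n =>
        ∑ k ∈ (Finset.univ.filter fun k : Fin N => k.val < j).attach,
          n k.1 * Dfun N T k.1.val)
    else 0)
termination_by j => j
decreasing_by
  exact (Finset.mem_filter.mp k.2).2

/-- The combinatorial core of the non-emptiness of quantum degree cones:
given, for every pair of indices i < j in {1,…,N}, a finite set T i j of
exponent functions n : Fin N → ℕ supported strictly between i and j, there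
is a positive-integer-valued degree function d with
d(i) + d(j) > Σ_{i<k<j} n(k)·d(k) for every n ∈ T i j. -/
theorem exists_degree_function (N : ℕ) (hN : 0 < N)
    (T : Fin N → Fin N → Finset (Fin N → ℕ))
    (hT : ∀ i j : Fin N, i < j → ∀ n ∈ T i j, ∀ k : Fin N, n k ≠ 0 → i < k ∧ k < j) :
    ∃ d : Fin N → ℕ, (∀ k : Fin N, 1 ≤ d k) ∧
      ∀ i j : Fin N, i < j → ∀ n ∈ T i j,
        ∑ k ∈ Finset.univ.filter (fun k : Fin N => i < k ∧ k < j), n k * d k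
          < d i + d j := by
  refine ⟨fun k => Dfun N T k.val, fun k => ?_, ?_⟩
  · show 1 ≤ Dfun N T k.val; rw [Dfun.eq_def]; exact Nat.le_add_right 1 _
  · intro i j hij n hn
    have h1 : ∑ k ∈ Finset.univ.filter (fun k : Fin N => i < k ∧ k < j),
          n k * Dfun N T k.val
        ≤ ∑ k ∈ Finset.univ.filter (fun k : Fin N => k.val < j.val),
          n k * Dfun N T k.val := by
      apply Finset.sum_le_sum_of_subset
      intro k hk
      simp only [Finset.mem_filter, Finset.mem_univ, true_and] at *
      exact hk.2
    have h2 : ∑ k ∈ Finset.univ.filter (fun k : Fin N => k.val < j.val),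
          n k * Dfun N T k.val
        ≤ Finset.univ.sup (fun p : Fin N × Fin N =>
            if p.2.val = j.val ∧ p.1 < p.2 then
              (T p.1 p.2).sup (fun m =>
                ∑ k ∈ (Finset.univ.filter fun k : Fin N => k.val < j.val).attach,
                  m k.1 * Dfun N T k.1.val)
            else 0) := by
      have e : ∑ k ∈ Finset.univ.filter (fun k : Fin N => k.val < j.val),
            n k * Dfun N T k.val
          = ∑ k ∈ (Finset.univ.filter fun k : Fin N => k.val < j.val).attach,
            n k.1 * Dfun N T k.1.val := (Finset.sum_attach _ _).symm
      rw [e]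
      calc _ ≤ (T i j).sup (fun m =>
            ∑ k ∈ (Finset.univ.filter fun k : Fin N => k.val < j.val).attach,
              m k.1 * Dfun N T k.1.val) := Finset.le_sup hn
        _ ≤ _ := by
            have := Finset.le_sup (f := fun p : Fin N × Fin N =>
              if p.2.val = j.val ∧ p.1 < p.2 then
                (T p.1 p.2).sup (fun m =>
                  ∑ k ∈ (Finset.univ.filter fun k : Fin N => k.val < j.val).attach,
                    m k.1 * Dfun N T k.1.val)
              else 0) (Finset.mem_univ (i, j))
            simpa [hij] using this
    have hDj : ∑ k ∈ Finset.univ.filter (fun k : Fin N => i < k ∧ k < j),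
        n k * Dfun N T k.val < Dfun N T j.val := by
      rw [Dfun.eq_def]
      exact Nat.lt_one_add_iff.mpr (h1.trans h2)
    have hdi : 1 ≤ Dfun N T i.val := by rw [Dfun.eq_def]; exact Nat.le_add_right 1 _
    calc _ < Dfun N T j.val := hDj
      _ ≤ Dfun N T i.val + Dfun N T j.val := Nat.le_add_left _ _
end
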